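/- Let 1 ≤ s < r < ∞, c = √(s/r), and X a complex Banach space. Assume the one-variable contraction: for all X-valued analytic polynomials g on 𝕋, ‖z ↦ g(cz)‖_{L^r(𝕋,X)} ≤ ‖g‖_{L^s(𝕋,X)}. Then for all N and all X-valued analytic polynomials f on 𝕋^N (finite sums ∑_α x_α z^α over α ∈ ℕ₀^N), ‖z ↦ f(cz₁,…,cz_N)‖_{L^r(𝕋^N,X)} ≤ ‖f‖_{L^s(𝕋^N,X)}. -/

import Mathlib

open MeasureTheory

/-- The point `e^{2πit}` on the unit circle `𝕋 ⊆ ℂ`. -/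
noncomputable def torus (t : ℝ) : ℂ := Complex.exp (2 * Real.pi * Complex.I * t)

/-- The unit cube `[0,1]^N`, parametrizing `𝕋^N` (with normalized Haar measure = volume). -/
def cube (N : ℕ) : Set (Fin N → ℝ) := Set.univ.pi fun _ => Set.Icc (0:ℝ) 1

/-!
Induction on the number of variables. Write a point of `𝕋^{N+1}` as `(w, z)` with `w ∈ 𝕋`,
`z ∈ 𝕋^N`, put `p = r / s ≥ 1` and `g(w, z) = f(w, cz)`. For fixed `z`, `w ↦ f(cw, cz)` is a
one-variable polynomial, so the hypothesis and Fubini give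
`‖f(c·)‖_r^r ≤ ∫ (∫ |g(w, z)|^s dw)^p dz`.
Minkowski's integral inequality in `L^p(dz)` bounds the `1/p`-th power of the right-hand side by
`∫ ‖g(w, ·)‖_r^s dw`, and for fixed `w`, `z ↦ g(w, z)` is an `N`-variable polynomial dilated by
`c`, so the induction hypothesis bounds this by `∫ ‖f(w, ·)‖_s^s dw = ‖f‖_s^s`.
-/

open Function
open scoped ENNReal

section MixedNorms

variable {α β : Type*} [MeasurableSpace α] [MeasurableSpace β] {μ : Measure α} {ν : Measure β}
  {F : α → β → ℝ≥0∞} {p : ℝ}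

theorem lintegral_Lp_le_of_le_lintegral [SFinite μ] [SFinite ν]
    (hF : Measurable (uncurry F)) (hp : 1 < p) {g : β → ℝ≥0∞} (hg : Measurable g)
    (hgF : ∀ b, g b ≤ ∫⁻ a, F a b ∂μ) (hg_top : ∫⁻ b, g b ^ p ∂ν ≠ ∞) :
    (∫⁻ b, g b ^ p ∂ν) ^ (1 / p) ≤ ∫⁻ a, (∫⁻ b, F a b ^ p ∂ν) ^ (1 / p) ∂μ := by
  have hpq : p.HolderConjugate p.conjExponent := .conjExponent hp
  set q := p.conjExponent
  set I := ∫⁻ b, g b ^ p ∂ν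
  set R := ∫⁻ a, (∫⁻ b, F a b ^ p ∂ν) ^ (1 / p) ∂μ
  have hF_left (a : α) : Measurable (F a) := hF.comp measurable_prodMk_left
  have hF_right (b : β) : Measurable (F · b) := hF.comp measurable_prodMk_right
  -- Hölder's inequality against `g ^ (p - 1)`, whose `q`-th power is `g ^ p`
  have hI : I ≤ R * I ^ (1 / q) := by
    have hpow (b : β) : (g b ^ (p - 1)) ^ q = g b ^ p := by
      rw [← ENNReal.rpow_mul, hpq.sub_one_mul_conj]
    calc I = ∫⁻ b, g b * g b ^ (p - 1) ∂ν := by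
          refine lintegral_congr fun b => ?_
          conv_lhs => rw [show p = 1 + (p - 1) by ring]
          rw [ENNReal.rpow_add_of_nonneg _ _ zero_le_one (by linarith), ENNReal.rpow_one]
      _ ≤ ∫⁻ b, ∫⁻ a, F a b * g b ^ (p - 1) ∂μ ∂ν := by
          refine lintegral_mono fun b => ?_
          rw [lintegral_mul_const _ (hF_right b)]
          gcongr
          exact hgF b
      _ = ∫⁻ a, ∫⁻ b, F a b * g b ^ (p - 1) ∂ν ∂μ :=
          (lintegral_lintegral_swap (by fun_prop)).symm
      _ ≤ ∫⁻ a, (∫⁻ b, F a b ^ p ∂ν) ^ (1 / p) * I ^ (1 / q) ∂μ := by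
          refine lintegral_mono fun a => ?_
          simpa only [Pi.mul_apply, hpow] using ENNReal.lintegral_mul_le_Lp_mul_Lq ν hpq
            (hF_left a).aemeasurable (hg.pow_const (p - 1)).aemeasurable
      _ = R * I ^ (1 / q) := lintegral_mul_const _ (by fun_prop)
  rcases eq_or_ne I 0 with hI0 | hI0
  · simp [hI0, hpq.pos]
  have hsplit : I = I ^ (1 / p) * I ^ (1 / q) := by
    rw [← ENNReal.rpow_add _ _ hI0 hg_top, one_div, one_div, hpq.inv_add_inv_eq_one,
      ENNReal.rpow_one]
  have hIq_ne_zero : I ^ (1 / q) ≠ 0 := by simp [hI0, hg_top]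
  have hIq_ne_top : I ^ (1 / q) ≠ ∞ := by simp [hI0, hg_top]
  exact (ENNReal.mul_le_mul_iff_left hIq_ne_zero hIq_ne_top).mp (hsplit ▸ hI)

theorem lintegral_Lp_lintegral_le [SFinite μ] [IsFiniteMeasure ν]
    (hF : Measurable (uncurry F)) (hp : 1 ≤ p) :
    (∫⁻ b, (∫⁻ a, F a b ∂μ) ^ p ∂ν) ^ (1 / p) ≤ ∫⁻ a, (∫⁻ b, F a b ^ p ∂ν) ^ (1 / p) ∂μ := by
  rcases hp.eq_or_lt with rfl | hp
  · simpa using (lintegral_lintegral_swap hF.aemeasurable).ge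
  have hp0 : 0 < p := by linarith
  set Φ := fun b => ∫⁻ a, F a b ∂μ
  have hΦ : Measurable Φ := hF.lintegral_prod_left
  -- truncated, `Φ` has finite `L^p` norm (`ν` is finite); monotone convergence undoes this
  have htrunc (n : ℕ) : (∫⁻ b, min (Φ b) n ^ p ∂ν) ^ (1 / p)
      ≤ ∫⁻ a, (∫⁻ b, F a b ^ p ∂ν) ^ (1 / p) ∂μ := by
    refine lintegral_Lp_le_of_le_lintegral hF hp (hΦ.min measurable_const)
      (fun b => min_le_left _ _) (ne_top_of_le_ne_top ?_ (lintegral_mono fun b =>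
        ENNReal.rpow_le_rpow (min_le_right (Φ b) n) hp0.le))
    simp [lintegral_const, hp0.le, ENNReal.mul_ne_top, measure_ne_top]
  have hsup : ∫⁻ b, Φ b ^ p ∂ν = ⨆ n : ℕ, ∫⁻ b, min (Φ b) n ^ p ∂ν := by
    rw [← lintegral_iSup (fun n => (hΦ.min measurable_const).pow_const p)
      fun m n hmn b => ENNReal.rpow_le_rpow (min_le_min_left _ (by exact_mod_cast hmn)) hp0.le]
    refine lintegral_congr fun b => ?_
    have := (ENNReal.orderIsoRpow p hp0).map_iSup fun n : ℕ => min (Φ b) n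
    simp only [ENNReal.orderIsoRpow_apply, ← inf_iSup_eq, ENNReal.iSup_natCast, inf_top_eq] at this
    exact this
  rw [hsup, ← ENNReal.orderIsoRpow_apply (1 / p) (by positivity), OrderIso.map_iSup]
  exact iSup_le htrunc

variable {ε : Type*} [ENorm ε]

omit [MeasurableSpace β] in
theorem eLpNorm'_rpow (f : α → ε) (q t : ℝ) :
    eLpNorm' f q μ ^ t = (∫⁻ a, ‖f a‖ₑ ^ q ∂μ) ^ (t / q) := by
  rw [eLpNorm'_eq_lintegral_enorm, ← ENNReal.rpow_mul, one_div_mul_eq_div]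

theorem eLpNorm'_prod_le_of_fiberwise [SFinite μ] [IsFiniteMeasure ν] {F G H : α → β → ε}
    {r s : ℝ} (hs : 0 < s) (hsr : s ≤ r)
    (hF : AEMeasurable (fun q : α × β => ‖F q.1 q.2‖ₑ) (μ.prod ν))
    (hG : Measurable fun q : α × β => ‖G q.1 q.2‖ₑ)
    (hH : AEMeasurable (fun q : α × β => ‖H q.1 q.2‖ₑ) (μ.prod ν))
    (hFG : ∀ b, eLpNorm' (F · b) r μ ≤ eLpNorm' (G · b) s μ)
    (hGH : ∀ a, eLpNorm' (G a) r ν ≤ eLpNorm' (H a) s ν) :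
    eLpNorm' (uncurry F) r (μ.prod ν) ≤ eLpNorm' (uncurry H) s (μ.prod ν) := by
  have hr : 0 < r := hs.trans_le hsr
  rw [← ENNReal.rpow_le_rpow_iff hs]
  calc eLpNorm' (uncurry F) r (μ.prod ν) ^ s
      = (∫⁻ b, ∫⁻ a, ‖F a b‖ₑ ^ r ∂μ ∂ν) ^ (s / r) := by
        rw [eLpNorm'_rpow]
        congr 1
        exact lintegral_prod_symm _ (hF.pow_const r)
    _ ≤ (∫⁻ b, (∫⁻ a, ‖G a b‖ₑ ^ s ∂μ) ^ (r / s) ∂ν) ^ (s / r) := by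
        gcongr with b
        calc ∫⁻ a, ‖F a b‖ₑ ^ r ∂μ = eLpNorm' (F · b) r μ ^ r :=
              lintegral_rpow_enorm_eq_rpow_eLpNorm' hr
          _ ≤ eLpNorm' (G · b) s μ ^ r := by gcongr; exact hFG b
          _ = _ := eLpNorm'_rpow _ _ _
    _ ≤ ∫⁻ a, (∫⁻ b, (‖G a b‖ₑ ^ s) ^ (r / s) ∂ν) ^ (s / r) ∂μ := by
        simpa only [one_div_div] using lintegral_Lp_lintegral_le
          (F := fun a b => ‖G a b‖ₑ ^ s) (hG.pow_const s) ((one_le_div hs).mpr hsr)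
    _ = ∫⁻ a, eLpNorm' (G a) r ν ^ s ∂μ := by
        simp only [eLpNorm'_rpow, ← ENNReal.rpow_mul, mul_div_cancel₀ _ hs.ne']
    _ ≤ ∫⁻ a, eLpNorm' (H a) s ν ^ s ∂μ := by
        gcongr with a
        exact hGH a
    _ = eLpNorm' (uncurry H) s (μ.prod ν) ^ s := by
        simp only [← lintegral_rpow_enorm_eq_rpow_eLpNorm' hs]
        exact (lintegral_prod _ (hH.pow_const s)).symm

omit [MeasurableSpace β] in
theorem eLpNorm'_pi_succ [SigmaFinite μ] {N : ℕ} (f : (Fin (N + 1) → α) → ε) (q : ℝ) :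
    eLpNorm' f q (Measure.pi fun _ => μ)
      = eLpNorm' (fun p : α × (Fin N → α) => f (Fin.cons p.1 p.2)) q
          (μ.prod (Measure.pi fun _ => μ)) := by
  simp only [eLpNorm'_eq_lintegral_enorm]
  rw [← ((measurePreserving_piFinSuccAbove (fun _ : Fin (N + 1) => μ) 0).symm).lintegral_comp_emb
    (MeasurableEquiv.measurableEmbedding _)]
  simp only [MeasurableEquiv.piFinSuccAbove_symm_apply, Fin.insertNthEquiv_zero]
  rfl

end MixedNorms

section Lp

variable {α X : Type*} [MeasurableSpace α] [NormedAddCommGroup X] {μ : Measure α} {q : ℝ}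

theorem rpow_integral_norm_rpow_eq_toReal_eLpNorm' {g : α → X} (hg : AEStronglyMeasurable g μ)
    (hq : 0 < q) : (∫ t, ‖g t‖ ^ q ∂μ) ^ (1 / q) = (eLpNorm' g q μ).toReal := by
  have := lpNorm_eq_integral_norm_rpow_toReal (p := ENNReal.ofReal q) (by simpa)
    ENNReal.ofReal_ne_top hg
  rw [ENNReal.toReal_ofReal hq.le, ← toReal_eLpNorm hg,
    eLpNorm_eq_eLpNorm' (by simpa) ENNReal.ofReal_ne_top, ENNReal.toReal_ofReal hq.le] at this
  rw [one_div, this]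

theorem eLpNorm'_ne_top_of_bound [IsFiniteMeasure μ] {g : α → X} {C : ℝ} (hC : ∀ t, ‖g t‖ ≤ C)
    (hq : 0 < q) : eLpNorm' g q μ ≠ ∞ := by
  refine ne_top_of_le_ne_top ?_ (eLpNorm'_mono_ae hq.le (g := fun _ => C)
    (.of_forall fun t => (hC t).trans (Real.le_norm_self C)))
  simp [eLpNorm'_const _ hq, ENNReal.mul_ne_top, hq.le]

end Lp

theorem Finset.sum_comp_smul_eq_sum_image {ι κ R M : Type*} [DecidableEq κ] [Monoid R]
    [AddCommMonoid M] [DistribMulAction R M] (A : Finset ι) (m : ι → κ) (a : κ → R) (y : ι → M) :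
    ∑ i ∈ A, a (m i) • y i = ∑ k ∈ A.image m, a k • ∑ i ∈ A with m i = k, y i := by
  rw [← Finset.sum_fiberwise_of_maps_to (fun i hi => Finset.mem_image_of_mem m hi)]
  refine Finset.sum_congr rfl fun k _ => ?_
  rw [Finset.smul_sum]
  exact Finset.sum_congr rfl fun i hi => by rw [(Finset.mem_filter.1 hi).2]

section MonomialSum

variable {T ι X : Type*} [NormedAddCommGroup X] [NormedSpace ℂ X]

/-- With `φ = torus` this is the polynomial `f = ∑_{i ∈ A} x_i z^{e i}` on `𝕋^N`, and with
`φ = c * torus` it is `f(c·)`. The exponent map `e` need not be injective, so that the coefficients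
of `f` in the last `N` variables are again of this form without regrouping. -/
noncomputable def monomialSum {N : ℕ} (φ : T → ℂ) (A : Finset ι) (e : ι → Fin N → ℕ)
    (x : ι → X) (t : Fin N → T) : X :=
  ∑ i ∈ A, (∏ j, φ (t j) ^ e i j) • x i

theorem monomialSum_cons {N : ℕ} (φ : T → ℂ) (A : Finset ι) (e : ι → Fin (N + 1) → ℕ)
    (x : ι → X) (w : T) (z : Fin N → T) :
    monomialSum φ A e x (Fin.cons w z)
      = ∑ i ∈ A, φ w ^ e i 0 • (∏ j, φ (z j) ^ e i j.succ) • x i := by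
  simp only [monomialSum, Fin.prod_univ_succ, Fin.cons_zero, Fin.cons_succ, mul_smul]

theorem sum_smul_eq_monomialSum {N : ℕ} (φ : T → ℂ) (A : Finset ι) (e : ι → Fin N → ℕ)
    (a : ι → ℂ) (x : ι → X) (z : Fin N → T) :
    ∑ i ∈ A, a i • (∏ j, φ (z j) ^ e i j) • x i = monomialSum φ A e (fun i => a i • x i) z := by
  simp only [monomialSum, smul_comm (a _)]

variable [MeasurableSpace T]

theorem stronglyMeasurable_monomialSum {N : ℕ} {φ : T → ℂ} (hφ : Measurable φ) (A : Finset ι)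
    (e : ι → Fin N → ℕ) (x : ι → X) : StronglyMeasurable (monomialSum φ A e x) := by
  unfold monomialSum
  fun_prop

theorem eLpNorm'_monomialSum_le {μ : Measure T} [IsFiniteMeasure μ] {φ ψ : T → ℂ}
    (hφ : Measurable φ) (hψ : Measurable ψ) {r s : ℝ} (hs : 0 < s) (hsr : s ≤ r)
    (h1 : ∀ (A : Finset ι) (m : ι → ℕ) (y : ι → X),
      eLpNorm' (fun w => ∑ i ∈ A, ψ w ^ m i • y i) r μ
        ≤ eLpNorm' (fun w => ∑ i ∈ A, φ w ^ m i • y i) s μ)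
    (N : ℕ) (A : Finset ι) (e : ι → Fin N → ℕ) (x : ι → X) :
    eLpNorm' (monomialSum ψ A e x) r (Measure.pi fun _ => μ)
      ≤ eLpNorm' (monomialSum φ A e x) s (Measure.pi fun _ => μ) := by
  induction N generalizing x with
  | zero =>
    have hconst (χ : T → ℂ) : monomialSum χ A e x = fun _ => ∑ i ∈ A, x i := by
      funext t
      simp [monomialSum]
    simp [hconst, eLpNorm'_const, hs, hs.trans_le hsr]
  | succ N ih =>
    rw [eLpNorm'_pi_succ, eLpNorm'_pi_succ]
    simp only [monomialSum_cons]
    -- the middle function is `f(w, cz)`: dilated in all variables but the first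
    exact eLpNorm'_prod_le_of_fiberwise (μ := μ) (ν := Measure.pi fun _ : Fin N => μ)
      (F := fun w z => ∑ i ∈ A, ψ w ^ e i 0 • (∏ j, ψ (z j) ^ e i j.succ) • x i)
      (G := fun w z => ∑ i ∈ A, φ w ^ e i 0 • (∏ j, ψ (z j) ^ e i j.succ) • x i)
      (H := fun w z => ∑ i ∈ A, φ w ^ e i 0 • (∏ j, φ (z j) ^ e i j.succ) • x i)
      hs hsr (by fun_prop) (by fun_prop) (by fun_prop)
      (fun z => h1 A (fun i => e i 0) fun i => (∏ j, ψ (z j) ^ e i j.succ) • x i)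
      fun w => by
        simp only [sum_smul_eq_monomialSum]
        exact ih _ _

end MonomialSum

section Torus

variable {X : Type*} [NormedAddCommGroup X] [NormedSpace ℂ X]

theorem norm_torus (t : ℝ) : ‖torus t‖ = 1 := by
  rw [torus, Complex.norm_exp]
  simp

@[fun_prop]
theorem continuous_torus : Continuous torus := by
  unfold torus
  fun_prop

theorem volume_restrict_cube (N : ℕ) :
    volume.restrict (cube N) = Measure.pi fun _ => volume.restrict (Set.Icc (0 : ℝ) 1) := by
  rw [cube, volume_pi, Measure.restrict_pi_pi]

theorem norm_sum_mul_torus_pow_smul_le (F : Finset ℕ) (c : ℂ) (x : ℕ → X) (t : ℝ) :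
    ‖∑ k ∈ F, (c * torus t) ^ k • x k‖ ≤ ∑ k ∈ F, ‖c‖ ^ k * ‖x k‖ := by
  refine (norm_sum_le _ _).trans (Finset.sum_le_sum fun k _ => ?_)
  rw [norm_smul, norm_pow, norm_mul, norm_torus, mul_one]

theorem norm_monomialSum_torus_le {ι : Type*} {N : ℕ} (A : Finset ι) (e : ι → Fin N → ℕ)
    (x : ι → X) (t : Fin N → ℝ) : ‖monomialSum torus A e x t‖ ≤ ∑ i ∈ A, ‖x i‖ := by
  refine (norm_sum_le _ _).trans (Finset.sum_le_sum fun i _ => ?_)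
  simp [norm_smul, norm_prod, norm_torus]

theorem eLpNorm'_sum_mul_torus_pow_smul_le {c r s : ℝ} (hr : 0 < r) (hs : 0 < s)
    (h1 : ∀ (F : Finset ℕ) (x : ℕ → X),
      (∫ t in Set.Icc (0:ℝ) 1, ‖∑ k ∈ F, ((c : ℂ) * torus t) ^ k • x k‖ ^ r) ^ (1/r)
        ≤ (∫ t in Set.Icc (0:ℝ) 1, ‖∑ k ∈ F, (torus t) ^ k • x k‖ ^ s) ^ (1/s))
    {ι : Type*} (A : Finset ι) (m : ι → ℕ) (y : ι → X) :
    eLpNorm' (fun w => ∑ i ∈ A, ((c : ℂ) * torus w) ^ m i • y i) r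
        (volume.restrict (Set.Icc (0 : ℝ) 1))
      ≤ eLpNorm' (fun w => ∑ i ∈ A, torus w ^ m i • y i) s
        (volume.restrict (Set.Icc (0 : ℝ) 1)) := by
  simp only [Finset.sum_comp_smul_eq_sum_image A m]
  set x : ℕ → X := fun k => ∑ i ∈ A with m i = k, y i
  rw [← ENNReal.toReal_le_toReal
    (eLpNorm'_ne_top_of_bound (norm_sum_mul_torus_pow_smul_le _ _ x) hr)
    (eLpNorm'_ne_top_of_bound (fun t => by simpa using norm_sum_mul_torus_pow_smul_le _ 1 x t) hs),
    ← rpow_integral_norm_rpow_eq_toReal_eLpNorm' (by fun_prop) hr,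
    ← rpow_integral_norm_rpow_eq_toReal_eLpNorm' (by fun_prop) hs]
  exact h1 _ x

end Torus

theorem weissler_iteration_general
    (X : Type*) [NormedAddCommGroup X] [NormedSpace ℂ X]
    (s r : ℝ) (hs : 1 ≤ s) (hsr : s < r) (c : ℝ)
    (h1 : ∀ (F : Finset ℕ) (x : ℕ → X),
      (∫ t in Set.Icc (0:ℝ) 1, ‖∑ k ∈ F, ((c : ℂ) * torus t) ^ k • x k‖ ^ r) ^ (1/r)
        ≤ (∫ t in Set.Icc (0:ℝ) 1, ‖∑ k ∈ F, (torus t) ^ k • x k‖ ^ s) ^ (1/s)) :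
    ∀ (N : ℕ) (A : Finset (Fin N → ℕ)) (x : (Fin N → ℕ) → X),
      (∫ t in cube N, ‖∑ α ∈ A, (∏ j, ((c : ℂ) * torus (t j)) ^ α j) • x α‖ ^ r) ^ (1/r)
        ≤ (∫ t in cube N, ‖∑ α ∈ A, (∏ j, torus (t j) ^ α j) • x α‖ ^ s) ^ (1/s) := by
  intro N A x
  have hs0 : 0 < s := by linarith
  have hr0 : 0 < r := by linarith
  have hφ : Measurable torus := continuous_torus.measurable
  have hψ : Measurable fun t => (c : ℂ) * torus t := by fun_prop
  have key := eLpNorm'_monomialSum_le hφ hψ hs0 hsr.le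
    (eLpNorm'_sum_mul_torus_pow_smul_le hr0 hs0 h1) N A (fun α => α) x
  rw [volume_restrict_cube]
  calc _ = (eLpNorm' (monomialSum (fun t => (c : ℂ) * torus t) A (fun α => α) x) r
          (Measure.pi fun _ => volume.restrict (Set.Icc (0 : ℝ) 1))).toReal :=
        rpow_integral_norm_rpow_eq_toReal_eLpNorm'
          (stronglyMeasurable_monomialSum hψ _ _ _).aestronglyMeasurable hr0
    _ ≤ _ := ENNReal.toReal_mono
        (eLpNorm'_ne_top_of_bound (norm_monomialSum_torus_le _ _ _) hs0) key
    _ = _ := (rpow_integral_norm_rpow_eq_toReal_eLpNorm'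
          (stronglyMeasurable_monomialSum hφ _ _ _).aestronglyMeasurable hs0).symm

/-- Iterating the one-variable Weissler contraction: if for all `X`-valued analytic polynomials
`g` on `𝕋` one has `‖g(c·)‖_{L^r} ≤ ‖g‖_{L^s}` (with `1 ≤ s < r < ∞`, `c = √(s/r)`), then the
same contraction holds for all `X`-valued analytic polynomials on `𝕋^N`, for every `N`. -/
theorem weissler_iteration
    (X : Type*) [NormedAddCommGroup X] [NormedSpace ℂ X] [CompleteSpace X]
    (s r : ℝ) (hs : 1 ≤ s) (hsr : s < r) (c : ℝ) (hc : c = Real.sqrt (s / r))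
    (h1 : ∀ (F : Finset ℕ) (x : ℕ → X),
      (∫ t in Set.Icc (0:ℝ) 1, ‖∑ k ∈ F, ((c : ℂ) * torus t) ^ k • x k‖ ^ r) ^ (1/r)
        ≤ (∫ t in Set.Icc (0:ℝ) 1, ‖∑ k ∈ F, (torus t) ^ k • x k‖ ^ s) ^ (1/s)) :
    ∀ (N : ℕ) (A : Finset (Fin N → ℕ)) (x : (Fin N → ℕ) → X),
      (∫ t in cube N, ‖∑ α ∈ A, (∏ j, ((c : ℂ) * torus (t j)) ^ α j) • x α‖ ^ r) ^ (1/r)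
        ≤ (∫ t in cube N, ‖∑ α ∈ A, (∏ j, torus (t j) ^ α j) • x α‖ ^ s) ^ (1/s) :=
  weissler_iteration_general X s r hs hsr c h1
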